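/- Let β be a mixed base and m ≥ 0, and let ℱ^β = {F ∈ ℕ^m : ∃ X ∈ ℕ^m, σ_β(X + F) = σ_β(X)}. Conversely, if σ_β(F) has 0-th digit 0 and F̂ + r ∈ ℱ^{β̂} for some r ∈ ρ(F), then F ∈ ℱ^β. -/

import Mathlib

/-!
Split off the lowest digit: σ_β(X) = (Σ x^i mod β_0) mod β_0 + β_0 · σ_{β̂}(X̂), where
X̂ = (⌊x^i/β_0⌋)_i. Given Y with σ_{β̂}(Y + F̂ + r) = σ_{β̂}(Y), take
x^i = β_0 y^i + r^i (β_0 - f^i_0). Where r^i = 1 the lowest digit of x^i completes f^i_0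
to a carry, so ⌊(X + F)/β_0⌋ = Y + F̂ + r while X̂ = Y. The lowest digits of X + F
and of X differ in total by Σ f^i_0 minus a multiple of β_0, which vanishes mod β_0
because the 0-th digit of σ_β(F) is 0.
-/

open scoped BigOperators

/-- β̂_L = β_0 ⋯ β_{L-1}, the place value of digit L in mixed base β. -/
def bhat (β : ℕ → ℕ) (L : ℕ) : ℕ := ∏ i ∈ Finset.range L, β i

/-- The L-th digit of n in the mixed base β. -/
def mdigit (β : ℕ → ℕ) (n L : ℕ) : ℕ := n / bhat β L % β L

/-- Digit-wise addition modulo β_L in mixed base β. -/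
def moplus (β : ℕ → ℕ) (n h : ℕ) : ℕ :=
  ∑ L ∈ Finset.range (n + h + 1), ((mdigit β n L + mdigit β h L) % β L) * bhat β L

/-- Digit-wise subtraction modulo β_L in mixed base β. -/
def mominus (β : ℕ → ℕ) (n h : ℕ) : ℕ :=
  ∑ L ∈ Finset.range (n + h + 1), ((β L + mdigit β n L - mdigit β h L) % β L) * bhat β L

/-- σ_β(X) = x^0 ⊕ ⋯ ⊕ x^{m-1}: the digit-wise Nim sum in mixed base β. -/
def msigma (β : ℕ → ℕ) {m : ℕ} (X : Fin m → ℕ) : ℕ :=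
  ∑ L ∈ Finset.range (∑ i, X i + 1), ((∑ i, mdigit β (X i) L) % β L) * bhat β L

/-- Hamming weight: number of nonzero components. -/
def hamwt {m : ℕ} (C : Fin m → ℕ) : ℕ := (Finset.univ.filter (fun i => C i ≠ 0)).card

/-- ord_β(n): the largest L with β̂_L ∣ n (⊤ for n = 0). -/
def mord (β : ℕ → ℕ) (n : ℕ) : ℕ∞ :=
  if n = 0 then ⊤ else (Nat.findGreatest (fun L => bhat β L ∣ n) n : ℕ∞)

/-- 𝒞 is a Sprague-Grundy system of σ_β: its members are nonzero moves and
σ_β satisfies the mex recursion of the take-away game Γ(ℕ^m, 𝒞), i.e. σ_β is the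
Sprague-Grundy function of that game. -/
def IsSGSystem (β : ℕ → ℕ) {m : ℕ} (𝒞 : Set (Fin m → ℕ)) : Prop :=
  (∀ C ∈ 𝒞, C ≠ 0) ∧
  ∀ X : Fin m → ℕ, msigma β X =
    sInf {n : ℕ | ∀ C ∈ 𝒞, (∀ i, C i ≤ X i) → msigma β (fun i => X i - C i) ≠ n}

section MixedBase

variable (β : ℕ → ℕ)

theorem bhat_succ' (L : ℕ) : bhat β (L + 1) = β 0 * bhat (fun K => β (K + 1)) L := by
  rw [bhat, Finset.prod_range_succ', bhat, mul_comm]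

theorem two_pow_le_bhat (hβ : ∀ L, 2 ≤ β L) (L : ℕ) : 2 ^ L ≤ bhat β L := by
  induction L with
  | zero => simp [bhat]
  | succ n ih =>
    rw [bhat, Finset.prod_range_succ, pow_succ]
    exact Nat.mul_le_mul ih (hβ n)

theorem mdigit_zero (n : ℕ) : mdigit β n 0 = n % β 0 := by
  simp [mdigit, bhat]

theorem mdigit_succ (n L : ℕ) :
    mdigit β n (L + 1) = mdigit (fun K => β (K + 1)) (n / β 0) L := by
  rw [mdigit, mdigit, bhat_succ', Nat.div_div_eq_div_mul]

theorem mdigit_eq_zero_of_lt_bhat {n L : ℕ} (h : n < bhat β L) : mdigit β n L = 0 := by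
  simp [mdigit, Nat.div_eq_of_lt h]

theorem msigma_eq_sum_range (hβ : ∀ L, 2 ≤ β L) {m : ℕ} (X : Fin m → ℕ) {N : ℕ}
    (hN : ∑ i, X i + 1 ≤ N) :
    msigma β X = ∑ L ∈ Finset.range N, ((∑ i, mdigit β (X i) L) % β L) * bhat β L := by
  refine Finset.sum_subset (Finset.range_subset_range.mpr hN) fun L _ hL => ?_
  have hXL : ∀ i, X i < L := fun i =>
    (Finset.single_le_sum (fun j _ => Nat.zero_le (X j)) (Finset.mem_univ i)).trans_lt
      (by simpa using hL)
  have hdigit (i : Fin m) : mdigit β (X i) L = 0 :=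
    mdigit_eq_zero_of_lt_bhat β <|
      ((hXL i).trans Nat.lt_two_pow_self).trans_le (two_pow_le_bhat β hβ L)
  simp [hdigit]

theorem msigma_eq_mod_add_mul (hβ : ∀ L, 2 ≤ β L) {m : ℕ} (X : Fin m → ℕ) :
    msigma β X = (∑ i, X i % β 0) % β 0 +
      β 0 * msigma (fun L => β (L + 1)) (fun i => X i / β 0) := by
  have hsum : ∑ i, X i / β 0 ≤ ∑ i, X i := Finset.sum_le_sum fun i _ => Nat.div_le_self _ _
  rw [msigma_eq_sum_range β hβ X (N := ∑ i, X i + 2) (by omega),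
    msigma_eq_sum_range _ (fun L => hβ (L + 1)) _ (N := ∑ i, X i + 1) (by omega),
    Finset.sum_range_succ', Finset.mul_sum, add_comm]
  simp only [mdigit_succ, mdigit_zero, bhat_succ']
  rw [bhat, Finset.prod_range_zero, mul_one, ← Finset.sum_nat_mod]
  exact congrArg _ (Finset.sum_congr rfl fun L _ => by ring)

theorem mdigit_msigma_zero (hβ : ∀ L, 2 ≤ β L) {m : ℕ} (X : Fin m → ℕ) :
    mdigit β (msigma β X) 0 = (∑ i, X i % β 0) % β 0 := by
  rw [mdigit_zero, msigma_eq_mod_add_mul β hβ, Nat.add_mul_mod_self_left, Nat.mod_mod]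

theorem msigma_mul_add (hβ : ∀ L, 2 ≤ β L) {m : ℕ} (Y d : Fin m → ℕ) (hd : ∀ i, d i < β 0) :
    msigma β (fun i => β 0 * Y i + d i) =
      (∑ i, d i) % β 0 + β 0 * msigma (fun L => β (L + 1)) Y := by
  have hβ0 : 0 < β 0 := by linarith [hβ 0]
  have hmod (i : Fin m) : (β 0 * Y i + d i) % β 0 = d i := by
    rw [Nat.mul_add_mod, Nat.mod_eq_of_lt (hd i)]
  have hdiv (i : Fin m) : (β 0 * Y i + d i) / β 0 = Y i := by
    rw [Nat.mul_add_div hβ0, Nat.div_eq_of_lt (hd i), add_zero]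
  simp only [msigma_eq_mod_add_mul β hβ, hmod, hdiv]

end MixedBase

/-- Conversely: if the 0-th digit of σ_β(F) is 0 and F̂ + r ∈ ℱ^{β̂} for some
r ∈ ρ(F), then F ∈ ℱ^β. -/
theorem stmt11 (β : ℕ → ℕ) (hβ : ∀ L, 2 ≤ β L) {m : ℕ} (F : Fin m → ℕ)
    (h0 : mdigit β (msigma β F) 0 = 0)
    (hr : ∃ r : Fin m → ℕ, (∀ i, r i ≤ 1 ∧ r i ≤ F i % β 0) ∧
      ∃ Y : Fin m → ℕ,
        msigma (fun L => β (L + 1)) (fun i => Y i + (F i / β 0 + r i)) =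
          msigma (fun L => β (L + 1)) Y) :
    ∃ X : Fin m → ℕ, msigma β (fun i => X i + F i) = msigma β X := by
  obtain ⟨r, hr, Y, hY⟩ := hr
  have hβ0 : 0 < β 0 := by linarith [hβ 0]
  set x₀ : Fin m → ℕ := fun i => r i * (β 0 - F i % β 0)
  set d : Fin m → ℕ := fun i => (1 - r i) * (F i % β 0)
  have hcoord (i : Fin m) : x₀ i < β 0 ∧ d i < β 0 ∧
      x₀ i + F i = β 0 * (F i / β 0 + r i) + d i ∧ d i + β 0 * r i = x₀ i + F i % β 0 := by
    have hF := Nat.div_add_mod (F i) (β 0)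
    have hf₀ := Nat.mod_lt (F i) hβ0
    obtain ⟨hr₁, hrf⟩ := hr i
    rcases Nat.le_one_iff_eq_zero_or_eq_one.mp hr₁ with h | h <;>
      simp only [x₀, d, h] at hrf ⊢ <;> grind
  choose hx₀ hd hcarry hlow using hcoord
  have hF₀ : (∑ i, F i % β 0) % β 0 = 0 := (mdigit_msigma_zero β hβ F).symm.trans h0
  have hdigits : (∑ i, d i) % β 0 = (∑ i, x₀ i) % β 0 := by
    have hsum : ∑ i, d i + β 0 * ∑ i, r i = ∑ i, x₀ i + ∑ i, F i % β 0 := by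
      simp only [Finset.mul_sum, ← Finset.sum_add_distrib, hlow]
    rw [← Nat.add_mul_mod_self_left _ (β 0) (∑ i, r i), hsum, Nat.add_mod, hF₀, add_zero,
      Nat.mod_mod]
  refine ⟨fun i => β 0 * Y i + x₀ i, ?_⟩
  calc msigma β (fun i => β 0 * Y i + x₀ i + F i)
      = msigma β (fun i => β 0 * (Y i + (F i / β 0 + r i)) + d i) := by
        congr 1; funext i; rw [add_assoc, hcarry i]; ring
    _ = msigma β (fun i => β 0 * Y i + x₀ i) := by
        rw [msigma_mul_add β hβ _ _ hd, hY, hdigits,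
          msigma_mul_add β hβ _ _ hx₀]
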